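/- arXiv:1404.0496 — 2 statements merged into one kernel-verified Lean document; each statement's English description precedes it below -/
import Mathlib

section
/- Let G be a connected finite simple graph and let P be a longest path in G with endpoints x and y. If d(x) + d(y) ≥ p, where p is the number of vertices of P, then c = p, i.e., G is Hamiltonian. -/
/-!
For every cycle `C`, `C.tail` is a path, so a longest path `P` has at least `C.length - 1` edges.
All neighbours of the ends `x`, `y` of `P` lie on `P`, so if `d(x) + d(y) > ℓ(P)`, pigeonhole gives
an index `i` with `x ~ P(i+1)` and `y ~ P(i)`; then `x … P(i) y … P(i+1) x` is a cycle with
`ℓ(P) + 1` edges, hence a longest one. In a connected graph a cycle longer than every path is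
Hamiltonian: an edge leaving it would extend the cycle, opened up at that edge, to a path as long
as the cycle.
-/

open Finset

namespace SimpleGraph

variable {V : Type*} {G : SimpleGraph V}

namespace Walk

def IsLongestPath {u v : V} (p : G.Walk u v) : Prop :=
  p.IsPath ∧ ∀ (a b : V) (q : G.Walk a b), q.IsPath → q.length ≤ p.length

variable {x y : V} {P : G.Walk x y}

theorem IsLongestPath.reverse (hP : P.IsLongestPath) : P.reverse.IsLongestPath :=
  ⟨hP.1.reverse, by simpa using hP.2⟩

theorem IsLongestPath.length_le_of_isCycle (hP : P.IsLongestPath) {u : V} {C : G.Walk u u}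
    (hC : C.IsCycle) : C.length ≤ P.length + 1 := by
  have := hP.2 _ _ _ hC.isPath_tail
  have := length_tail_add_one hC.not_nil
  omega

theorem IsLongestPath.mem_support_of_adj_start (hP : P.IsLongestPath) {z : V} (h : G.Adj x z) :
    z ∈ P.support := by
  by_contra hz
  have := hP.2 _ _ _ (hP.1.cons hz (h := h.symm))
  simp at this

theorem IsLongestPath.mem_support_of_adj_end (hP : P.IsLongestPath) {z : V} (h : G.Adj y z) :
    z ∈ P.support := by
  simpa using hP.reverse.mem_support_of_adj_start h

theorem IsPath.cons_isCycle {u v : V} {p : G.Walk v u} (hp : p.IsPath) (h : G.Adj u v)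
    (hl : 2 ≤ p.length) : (cons h p).IsCycle := by
  refine (cons_isCycle_iff p h).mpr ⟨hp, fun he => ?_⟩
  rw [Sym2.eq_swap] at he
  have := hp.length_eq_one_of_mem_edges he
  omega

/-- Pósa's rotation of `p` at its `i`-th vertex, using an edge from there to the last vertex:
`p(0) … p(i) p(ℓ) p(ℓ-1) … p(i+1)`. -/
def posaRotation {u v : V} (p : G.Walk u v) (i : ℕ) (h : G.Adj (p.getVert i) v) :
    G.Walk u (p.getVert (i + 1)) :=
  (p.take i).append (cons h (p.drop (i + 1)).reverse)

variable {i : ℕ} {h : G.Adj (P.getVert i) y}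

theorem support_posaRotation_perm (hi : i < P.length) :
    (P.posaRotation i h).support.Perm P.support := by
  rw [posaRotation, support_append, support_cons, List.tail_cons, support_reverse, support_take,
    drop_support_eq_support_drop_min, min_eq_left hi]
  exact ((List.reverse_perm _).append_left _).trans (by rw [List.take_append_drop])

theorem length_posaRotation (hi : i < P.length) : (P.posaRotation i h).length = P.length := by
  simp only [posaRotation, length_append, length_cons, length_reverse, take_length, drop_length]
  omega

theorem IsPath.posaRotation (hP : P.IsPath) (hi : i < P.length) : (P.posaRotation i h).IsPath :=
  IsPath.mk' ((support_posaRotation_perm hi).nodup_iff.mpr hP.support_nodup)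

end Walk

open Walk

theorem degree_le_card_filter_adj [Fintype V] [DecidableRel G.Adj] {u : V} (f : ℕ → V) (n : ℕ)
    (h : ∀ z, G.Adj u z → ∃ i < n, f i = z) : G.degree u ≤ #{i ∈ range n | G.Adj u (f i)} := by
  classical
  calc G.degree u = #(G.neighborFinset u) := (card_neighborFinset_eq_degree G u).symm
    _ ≤ #({i ∈ range n | G.Adj u (f i)}.image f) := card_le_card fun z hz => by
        rw [mem_neighborFinset] at hz
        obtain ⟨i, hi, rfl⟩ := h z hz
        exact mem_image_of_mem f (by simp [hi, hz])
    _ ≤ _ := card_image_le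

theorem exists_adj_getVert_succ_adj_getVert [Fintype V] [DecidableRel G.Adj] {x y : V}
    {P : G.Walk x y} (hx : ∀ z, G.Adj x z → z ∈ P.support) (hy : ∀ z, G.Adj y z → z ∈ P.support)
    (hdeg : P.length < G.degree x + G.degree y) :
    ∃ i < P.length, G.Adj x (P.getVert (i + 1)) ∧ G.Adj y (P.getVert i) := by
  have hA := degree_le_card_filter_adj (fun i => P.getVert (i + 1)) P.length fun z hz => by
    obtain ⟨n, rfl, hn⟩ := mem_support_iff_exists_getVert.mp (hx z hz)
    have : n ≠ 0 := by rintro rfl; simp at hz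
    exact ⟨n - 1, by omega, by rw [Nat.sub_add_cancel (by omega)]⟩
  have hB := degree_le_card_filter_adj P.getVert P.length fun z hz => by
    obtain ⟨n, rfl, hn⟩ := mem_support_iff_exists_getVert.mp (hy z hz)
    have : n ≠ P.length := by rintro rfl; simp at hz
    exact ⟨n, by omega, rfl⟩
  obtain ⟨i, hi⟩ : ({i ∈ range P.length | G.Adj x (P.getVert (i + 1))} ∩
      {i ∈ range P.length | G.Adj y (P.getVert i)}).Nonempty :=
    inter_nonempty_of_card_lt_card_add_card (filter_subset _ _) (filter_subset _ _)
      (by rw [card_range]; omega)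
  simp only [mem_inter, mem_filter, mem_range] at hi
  exact ⟨i, hi.1.1, hi.1.2, hi.2.2⟩

theorem Connected.isHamiltonianCycle_of_isLongestPath [DecidableEq V] (hconn : G.Connected)
    {x y u : V}
    {P : G.Walk x y} (hP : P.IsLongestPath) {C : G.Walk u u} (hC : C.IsCycle)
    (hlen : P.length < C.length) : C.IsHamiltonianCycle := by
  have hall : ∀ w, w ∈ C.support := by
    by_contra! ⟨w, hw⟩
    obtain ⟨d, -, hdC, hdw⟩ :=
      (hconn u w).some.exists_boundary_dart {v | v ∈ C.support} C.start_mem_support hw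
    have hC' : (C.rotate d.fst hdC).IsCycle := hC.rotate hdC
    have hnot : d.snd ∉ (C.rotate d.fst hdC).tail.support := by
      rw [support_tail_of_not_nil _ hC'.not_nil]
      exact fun h => hdw (List.mem_of_mem_tail ((support_rotate C d.fst hdC).mem_iff.mp h))
    have hlong := hP.2 _ _ _ (hC'.isPath_tail.concat hnot d.adj)
    have htail := length_tail_add_one hC'.not_nil
    rw [length_concat] at hlong
    rw [length_rotate] at htail
    omega
  refine ⟨hC, hC.isPath_tail.isHamiltonian_of_mem fun w => ?_⟩
  rw [support_tail_of_not_nil _ hC.not_nil]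
  rcases (mem_support_iff C).mp (hall w) with rfl | hw
  · exact end_mem_tail_support hC.not_nil
  · exact hw

end SimpleGraph

open SimpleGraph

/-- **Lemma 1(ii).** Let `G` be a connected finite simple graph and
`P` a longest path from `x` to `y` with `p` vertices. If `d(x) + d(y) ≥ p`, then
`c = p`, i.e. `G` is Hamiltonian. -/
theorem stmt_5 {V : Type*} [Fintype V] [DecidableEq V] (G : SimpleGraph V)
    [DecidableRel G.Adj] (hconn : G.Connected)
    (x y : V) (P : G.Walk x y) (hP : P.IsPath)
    (hPmax : ∀ (u v : V) (Q : G.Walk u v), Q.IsPath → Q.length ≤ P.length)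
    (p c : ℕ) (hp : p = P.length + 1)
    (hc : ∃ (u : V) (C : G.Walk u u), C.IsCycle ∧ C.length = c)
    (hcmax : ∀ (u : V) (C : G.Walk u u), C.IsCycle → C.length ≤ c)
    (hdeg : p ≤ G.degree x + G.degree y) :
    c = p ∧ G.IsHamiltonian := by
  have hPL : P.IsLongestPath := ⟨hP, hPmax⟩
  obtain ⟨u, C₀, hC₀, rfl⟩ := hc
  have hC₀_le := hPL.length_le_of_isCycle hC₀
  have hL : 2 ≤ P.length := by have := hC₀.three_le_length; omega
  obtain ⟨i, hi, hxi, hyi⟩ := exists_adj_getVert_succ_adj_getVert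
    (fun _ => hPL.mem_support_of_adj_start) (fun _ => hPL.mem_support_of_adj_end) (by omega)
  let C := Walk.cons hxi (P.posaRotation i hyi.symm).reverse
  have hClen : C.length = p := by simp [C, Walk.length_posaRotation hi, hp]
  have hC : C.IsCycle :=
    (hP.posaRotation hi).reverse.cons_isCycle hxi (by simp [Walk.length_posaRotation hi]; omega)
  exact ⟨le_antisymm (by omega) (hClen ▸ hcmax x C hC),
    fun _ => ⟨x, C, hconn.isHamiltonianCycle_of_isLongestPath hPL hC (by omega)⟩⟩
end

section
/- Let G be a connected finite simple graph and let P be a longest path in G, with endpoints x and y and a fixed orientation from x to y. Suppose there exist vertices z₁, z₂ on P with x ≺ z₁ ≺ z₂ ≺ y along P such that yz₁ ∈ E(G), xz₂ ∈ E(G), the subpath of P from z₁ to z₂ has at least 3 vertices, neither xz ∈ E(G) nor yz ∈ E(G) for every internal vertex z of the subpath from z₁ to z₂, and d(x) + d(y) ≥ p + 3 − |z₁→z₂|, where |z₁→z₂| is the number of vertices of the subpath of P from z₁ to z₂. Then c = p. -/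
/-! The neighbours of the ends `x`, `y` of a longest path `P = v₀ ⋯ vₙ` all lie on `P`, and none
of them is an internal vertex of `z₁ → z₂`. Hence the index sets `{i < n | y ~ vᵢ}` and
`{i < n | x ~ vᵢ₊₁}` both avoid the `i₂ - i₁ - 2` indices strictly between `i₁` and `i₂ - 1`,
and the degree bound makes them intersect: some `i` has `y ~ vᵢ` and `x ~ vᵢ₊₁`. Then
`x ⋯ vᵢ y vₙ₋₁ ⋯ vᵢ₊₁ x` is a cycle on all `p` vertices, while deleting an edge of any cycle
leaves a path, so `c ≤ p`. -/

open Finset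

namespace SimpleGraph.Walk

variable {V : Type*} {G : SimpleGraph V} {u v : V}

theorem IsCycle.length_le_succ_of_forall_isPath_length_le {C : G.Walk u u} (hC : C.IsCycle)
    {L : ℕ} (hmax : ∀ (a b : V) (q : G.Walk a b), q.IsPath → q.length ≤ L) :
    C.length ≤ L + 1 := by
  cases C with
  | nil => exact absurd hC not_isCycle_nil
  | cons h C' => simpa using hmax _ _ C' ((cons_isCycle_iff C' h).mp hC).1

theorem IsPath.cons_isCycle_of_two_le_length {p : G.Walk v u} (hp : p.IsPath) (h : G.Adj u v)
    (hlen : 2 ≤ p.length) : (cons h p).IsCycle := by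
  refine (cons_isCycle_iff p h).mpr ⟨hp, fun he => ?_⟩
  have := hp.length_eq_one_of_mem_edges (Sym2.eq_swap ▸ he)
  omega

theorem IsPath.mem_support_of_adj_start {p : G.Walk u v} (hp : p.IsPath)
    (hmax : ∀ (a b : V) (q : G.Walk a b), q.IsPath → q.length ≤ p.length) {w : V}
    (h : G.Adj u w) : w ∈ p.support := by
  by_contra hw
  simpa using hmax _ _ _ (hp.cons (h := h.symm) hw)

theorem IsPath.mem_support_of_adj_end {p : G.Walk u v} (hp : p.IsPath)
    (hmax : ∀ (a b : V) (q : G.Walk a b), q.IsPath → q.length ≤ p.length) {w : V}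
    (h : G.Adj v w) : w ∈ p.support := by
  simpa using hp.reverse.mem_support_of_adj_start (by simpa using hmax) h

def posaRotate (p : G.Walk u v) (j : ℕ) (h : G.Adj (p.getVert j) v) :
    G.Walk u (p.getVert (j + 1)) :=
  (p.take j).append (cons h (p.drop (j + 1)).reverse)

variable {p : G.Walk u v} {j : ℕ} {h : G.Adj (p.getVert j) v}

theorem length_posaRotate (hj : j < p.length) : (p.posaRotate j h).length = p.length := by
  simp only [posaRotate, length_append, length_cons, length_reverse, take_length, drop_length]
  omega

theorem support_posaRotate_perm (hj : j < p.length) :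
    (p.posaRotate j h).support.Perm p.support := by
  have hmin : (j + 1) ⊓ p.length = j + 1 := by omega
  simp only [posaRotate, support_append, support_cons, List.tail_cons, support_reverse,
    support_take, drop_support_eq_support_drop_min, hmin]
  exact ((List.reverse_perm _).append_left _).trans (by rw [List.take_append_drop])

theorem IsPath.posaRotate (hp : p.IsPath) (hj : j < p.length) : (p.posaRotate j h).IsPath := by
  rw [isPath_def, (support_posaRotate_perm hj).nodup_iff]
  exact hp.support_nodup

theorem IsPath.cons_posaRotate_isCycle (hp : p.IsPath) (hlen : 2 ≤ p.length) (hj : j < p.length)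
    (hu : G.Adj (p.getVert (j + 1)) u) : (cons hu (p.posaRotate j h)).IsCycle :=
  (hp.posaRotate hj).cons_isCycle_of_two_le_length hu (by rw [length_posaRotate hj]; exact hlen)

end SimpleGraph.Walk

namespace SimpleGraph

variable {V : Type*} {G : SimpleGraph V} [Fintype V] [DecidableRel G.Adj]

theorem degree_le_card_filter_adj_s6 {ι : Type*} (s : Finset ι) (f : ι → V) {v : V}
    (hcover : ∀ w, G.Adj v w → ∃ i ∈ s, f i = w) :
    G.degree v ≤ #{i ∈ s | G.Adj v (f i)} := by
  rw [← card_neighborFinset_eq_degree]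
  refine card_le_card_of_surjOn f fun w hw => ?_
  obtain ⟨i, hi, rfl⟩ := hcover w ((mem_neighborFinset _ _ _).mp hw)
  exact ⟨i, by simpa [hi] using hw, rfl⟩

theorem Walk.exists_adj_getVert_adj_getVert_succ {u v : V} (p : G.Walk u v)
    (hu : ∀ w, G.Adj u w → w ∈ p.support) (hv : ∀ w, G.Adj v w → w ∈ p.support)
    (S : Finset ℕ) (hS : S ⊆ range p.length)
    (hSadj : ∀ j ∈ S, ¬ G.Adj v (p.getVert j) ∧ ¬ G.Adj u (p.getVert (j + 1)))
    (hdeg : p.length < G.degree u + G.degree v + #S) :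
    ∃ j < p.length, G.Adj v (p.getVert j) ∧ G.Adj u (p.getVert (j + 1)) := by
  set T := range p.length \ S
  have hdegv : G.degree v ≤ #{j ∈ T | G.Adj v (p.getVert j)} := by
    refine degree_le_card_filter_adj_s6 _ _ fun w hw => ?_
    obtain ⟨i, rfl, hi⟩ := p.mem_support_iff_exists_getVert.mp (hv w hw)
    have hin : i ≠ p.length := by rintro rfl; simp at hw
    exact ⟨i, by simpa [T] using ⟨by omega, fun hiS => (hSadj i hiS).1 hw⟩, rfl⟩
  have hdegu : G.degree u ≤ #{j ∈ T | G.Adj u (p.getVert (j + 1))} := by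
    refine degree_le_card_filter_adj_s6 _ _ fun w hw => ?_
    obtain ⟨i, rfl, hi⟩ := p.mem_support_iff_exists_getVert.mp (hu w hw)
    obtain ⟨k, rfl⟩ : ∃ k, i = k + 1 := Nat.exists_eq_add_one.mpr
      (Nat.pos_of_ne_zero (by rintro rfl; simp at hw))
    exact ⟨k, by simpa [T] using ⟨by omega, fun hkS => (hSadj k hkS).2 hw⟩, rfl⟩
  have hT : #T + #S = p.length := by
    rw [card_sdiff_of_subset hS, card_range, Nat.sub_add_cancel (by simpa using card_le_card hS)]
  obtain ⟨j, hj⟩ := inter_nonempty_of_card_lt_card_add_card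
    (filter_subset (fun j => G.Adj v (p.getVert j)) T)
    (filter_subset (fun j => G.Adj u (p.getVert (j + 1))) T) (by omega)
  simp only [mem_inter, mem_filter, T, mem_sdiff, mem_range] at hj
  exact ⟨j, hj.1.1.1, hj.1.2, hj.2.2⟩

end SimpleGraph

theorem stmt_6_general {V : Type*} [Fintype V] (G : SimpleGraph V)
    [DecidableRel G.Adj]
    (x y : V) (P : G.Walk x y) (hP : P.IsPath)
    (hPmax : ∀ (u v : V) (Q : G.Walk u v), Q.IsPath → Q.length ≤ P.length)
    (p c : ℕ) (hp : p = P.length + 1)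
    (hc : ∃ (u : V) (C : G.Walk u u), C.IsCycle ∧ C.length = c)
    (hcmax : ∀ (u : V) (C : G.Walk u u), C.IsCycle → C.length ≤ c)
    (i₁ i₂ : ℕ)
    (h₂y : i₂ < P.length)
    (hlen : i₁ + 2 ≤ i₂)
    (hint : ∀ (j : ℕ) (z : V), i₁ < j → j < i₂ → P.support[j]? = some z →
      ¬ G.Adj x z ∧ ¬ G.Adj y z)
    (hdeg : p + 3 ≤ G.degree x + G.degree y + (i₂ - i₁ + 1)) :
    c = p := by
  obtain ⟨_, C, hC, rfl⟩ := hc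
  have hcp : C.length ≤ p := hp ▸ hC.length_le_succ_of_forall_isPath_length_le hPmax
  have hint' (j : ℕ) (h₁ : i₁ < j) (h₂ : j < i₂) :
      ¬ G.Adj x (P.getVert j) ∧ ¬ G.Adj y (P.getVert j) :=
    hint j _ h₁ h₂ (P.getVert_eq_support_getElem? (by omega)).symm
  obtain ⟨j, hj, hyj, hxj⟩ := P.exists_adj_getVert_adj_getVert_succ
    (fun _ => hP.mem_support_of_adj_start hPmax) (fun _ => hP.mem_support_of_adj_end hPmax)
    (Ioo i₁ (i₂ - 1)) (fun k hk => by simp only [mem_Ioo, mem_range] at hk ⊢; omega)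
    (fun k hk => by
      simp only [mem_Ioo] at hk
      exact ⟨(hint' k (by omega) (by omega)).2, (hint' (k + 1) (by omega) (by omega)).1⟩)
    (by rw [Nat.card_Ioo]; omega)
  have hcycle := hP.cons_posaRotate_isCycle (h := hyj.symm) (by omega) hj hxj.symm
  have := hcmax _ _ hcycle
  rw [SimpleGraph.Walk.length_cons, SimpleGraph.Walk.length_posaRotate hj] at this
  omega

/-- **Lemma 1(iii).** Let `G` be a connected finite simple graph and
`P` a longest path from `x` to `y` with `p` vertices.  Suppose `z₁, z₂` lie on `P`
at positions `i₁ < i₂` with `x ≺ z₁ ≺ z₂ ≺ y` (i.e. `0 < i₁` and `i₂ < P.length`),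
`yz₁ ∈ E(G)`, `xz₂ ∈ E(G)`, the subpath of `P` from `z₁` to `z₂` has
`i₂ - i₁ + 1 ≥ 3` vertices, no internal vertex `z` of that subpath satisfies
`xz ∈ E(G)` or `yz ∈ E(G)`, and `d(x) + d(y) ≥ p + 3 − (i₂ - i₁ + 1)`.
Then `c = p`. -/
theorem stmt_6 {V : Type*} [Fintype V] [DecidableEq V] (G : SimpleGraph V)
    [DecidableRel G.Adj] (hconn : G.Connected)
    (x y : V) (P : G.Walk x y) (hP : P.IsPath)
    (hPmax : ∀ (u v : V) (Q : G.Walk u v), Q.IsPath → Q.length ≤ P.length)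
    (p c : ℕ) (hp : p = P.length + 1)
    (hc : ∃ (u : V) (C : G.Walk u u), C.IsCycle ∧ C.length = c)
    (hcmax : ∀ (u : V) (C : G.Walk u u), C.IsCycle → C.length ≤ c)
    (z₁ z₂ : V) (i₁ i₂ : ℕ)
    (hz₁ : P.support[i₁]? = some z₁) (hz₂ : P.support[i₂]? = some z₂)
    (hx₁ : 0 < i₁) (h₂y : i₂ < P.length)
    (hyz₁ : G.Adj y z₁) (hxz₂ : G.Adj x z₂)
    (hlen : i₁ + 2 ≤ i₂)
    (hint : ∀ (j : ℕ) (z : V), i₁ < j → j < i₂ → P.support[j]? = some z →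
      ¬ G.Adj x z ∧ ¬ G.Adj y z)
    (hdeg : p + 3 ≤ G.degree x + G.degree y + (i₂ - i₁ + 1)) :
    c = p :=
  stmt_6_general G x y P hP hPmax p c hp hc hcmax i₁ i₂ h₂y hlen hint hdeg
end
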